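/- arXiv:1606.08335 — 2 statements merged into one kernel-verified Lean document; each statement's English description precedes it below -/
import Mathlib

section
/- For p > 0, the ellipse domains D_n = {(x,y) : (x-n)²/n² + y²/(2p(n-p)) < 1}, defined for integers n > p, form an increasing sequence (D_n ⊆ D_{n+1}) whose union is the parabolic domain D = {(x,y) : 4px > y²}. -/
/-!
Clearing denominators, `(x, y) ∈ D_n` iff `y² + p y² / (n - p) + 2 p x² / n < 4 p x`. The two
extra terms are nonnegative, decrease in `n` and tend to `0` as `n → ∞`; this gives at once
`D_n ⊆ D_{n+1}`, `D_n ⊆ D`, and that every point of `D` lies in `D_n` for all large `n`.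
-/

open Set Filter Topology

def ellipseDomain (p n : ℝ) : Set (ℝ × ℝ) :=
  {q | (q.1 - n) ^ 2 / n ^ 2 + q.2 ^ 2 / (2 * p * (n - p)) < 1}

def parabolicDomain (p : ℝ) : Set (ℝ × ℝ) := {q | q.2 ^ 2 < 4 * p * q.1}

noncomputable def ellipseExcess (p n : ℝ) (q : ℝ × ℝ) : ℝ :=
  p * q.2 ^ 2 / (n - p) + 2 * p * q.1 ^ 2 / n

section

variable {p n m : ℝ} {q : ℝ × ℝ}

theorem mem_ellipseDomain_iff (hp : 0 < p) (hn : p < n) :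
    q ∈ ellipseDomain p n ↔ q.2 ^ 2 + ellipseExcess p n q < 4 * p * q.1 := by
  have hn₀ : 0 < n := hp.trans hn
  have hnp : 0 < n - p := sub_pos.mpr hn
  have key : (q.1 - n) ^ 2 / n ^ 2 + q.2 ^ 2 / (2 * p * (n - p)) - 1
      = (q.2 ^ 2 + ellipseExcess p n q - 4 * p * q.1) / (2 * p * n) := by
    unfold ellipseExcess
    field_simp
    ring
  rw [ellipseDomain, mem_ofPred_eq, ← sub_neg, key, div_lt_iff₀ (by positivity), zero_mul, sub_neg]

theorem ellipseExcess_nonneg (hp : 0 < p) (hn : p < n) : 0 ≤ ellipseExcess p n q := by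
  have hn₀ : 0 < n := hp.trans hn
  have hnp : 0 < n - p := sub_pos.mpr hn
  unfold ellipseExcess
  positivity

theorem ellipseExcess_le_of_le (hp : 0 < p) (hn : p < n) (hnm : n ≤ m) :
    ellipseExcess p m q ≤ ellipseExcess p n q := by
  have hn₀ : 0 < n := hp.trans hn
  have hnp : 0 < n - p := sub_pos.mpr hn
  unfold ellipseExcess
  gcongr

theorem tendsto_ellipseExcess (p : ℝ) (q : ℝ × ℝ) :
    Tendsto (fun n ↦ ellipseExcess p n q) atTop (𝓝 0) := by
  have h₁ := tendsto_const_nhds (x := p * q.2 ^ 2).div_atTop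
    (tendsto_atTop_add_const_right atTop (-p) tendsto_id)
  have h₂ := tendsto_const_nhds (x := 2 * p * q.1 ^ 2).div_atTop tendsto_id
  simpa [ellipseExcess, sub_eq_add_neg] using h₁.add h₂

theorem ellipseDomain_mono (hp : 0 < p) (hn : p < n) (hnm : n ≤ m) :
    ellipseDomain p n ⊆ ellipseDomain p m := fun q hq ↦ by
  rw [mem_ellipseDomain_iff hp hn] at hq
  rw [mem_ellipseDomain_iff hp (hn.trans_le hnm)]
  linarith [ellipseExcess_le_of_le (q := q) hp hn hnm]

theorem ellipseDomain_subset_parabolicDomain (hp : 0 < p) (hn : p < n) :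
    ellipseDomain p n ⊆ parabolicDomain p := fun q hq ↦ by
  rw [mem_ellipseDomain_iff hp hn] at hq
  exact (le_add_of_nonneg_right (ellipseExcess_nonneg hp hn)).trans_lt hq

theorem eventually_mem_ellipseDomain (hp : 0 < p) (hq : q ∈ parabolicDomain p) :
    ∀ᶠ n in atTop, q ∈ ellipseDomain p n := by
  have hgap : 0 < 4 * p * q.1 - q.2 ^ 2 := sub_pos.mpr hq
  filter_upwards [(tendsto_ellipseExcess p q).eventually (gt_mem_nhds hgap),
    eventually_gt_atTop p] with n hexcess hn
  rw [mem_ellipseDomain_iff hp hn]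
  linarith

end

/-- The ellipse domains D_n (for n > p) increase and their union is the parabolic
domain {4px > y²}. -/
theorem ellipses_increase_to_parabola (p : ℝ) (hp : 0 < p)
    (D : ℕ → Set (ℝ × ℝ))
    (hD : ∀ n : ℕ, D n = {q : ℝ × ℝ |
      (q.1 - (n : ℝ)) ^ 2 / (n : ℝ) ^ 2 + q.2 ^ 2 / (2 * p * ((n : ℝ) - p)) < 1}) :
    (∀ n : ℕ, p < (n : ℝ) → D n ⊆ D (n + 1)) ∧
    (⋃ n ∈ {n : ℕ | p < (n : ℝ)}, D n) = {q : ℝ × ℝ | q.2 ^ 2 < 4 * p * q.1} := by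
  have hD' : ∀ n : ℕ, D n = ellipseDomain p n := hD
  refine ⟨fun n hn ↦ ?_, subset_antisymm ?_ fun q hq ↦ ?_⟩
  · rw [hD', hD', Nat.cast_succ]
    exact ellipseDomain_mono hp hn (le_add_of_nonneg_right zero_le_one)
  · simp only [iUnion_subset_iff, hD']
    exact fun n hn ↦ ellipseDomain_subset_parabolicDomain hp hn
  · have hcast := tendsto_natCast_atTop_atTop (R := ℝ)
    obtain ⟨n, hqn, hn⟩ := ((hcast.eventually (eventually_mem_ellipseDomain hp hq)).and
      (hcast.eventually_gt_atTop p)).exists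
    exact mem_biUnion hn (hD' n ▸ hqn)
end

section
/- If α ≥ π/2, then there is no function h on (-α/2, α/2) satisfying h'' + 4h = -1, h(±α/2) = 0, h(θ) = h(-θ), and h > 0 on (-α/2, α/2). Consequently the Saint-Venant problem on an angular sector of angle α ≥ π/2 has no solution of the form r²h(θ). -/
/-!
Adding `1/4` turns `h'' + 4h = -1` into `y'' + 4y = 0`, whose solutions are
`y 0 · cos 2θ + (y' 0 / 2) · sin 2θ`; evenness kills the sine term, so `h θ = (h 0 + 1/4) cos 2θ - 1/4`.
By continuity this formula and `h ≥ 0` persist on the closed interval, which for `α ≥ π/2` contains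
`π/4`, where the formula gives `h (π/4) = -1/4`. A solution `r² h(θ)` of the Saint-Venant problem
restricted to `r = 1` yields such an `h`.
-/

open Real Set

theorem deriv_eq_zero_of_even {f : ℝ → ℝ} (hf : ∀ x, f x = f (-x)) : deriv f 0 = 0 := by
  have h : deriv f 0 = -deriv f 0 := by
    conv_lhs => rw [show f = fun x => f (-x) from funext hf]
    rw [deriv_comp_neg, neg_zero]
  linarith

/-- `ω y cos ωx - y' sin ωx` and `ω y sin ωx + y' cos ωx` are first integrals of the equation. -/
theorem mul_eq_cos_add_sin_of_deriv_deriv_add_sq_mul_eq_zero {s : Set ℝ} {y : ℝ → ℝ} (ω : ℝ)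
    (hs : IsOpen s) (hs' : IsPreconnected s) (h0 : (0 : ℝ) ∈ s) (hy : ContDiffOn ℝ 2 y s)
    (hode : ∀ x ∈ s, deriv (deriv y) x + ω ^ 2 * y x = 0) :
    ∀ x ∈ s, ω * y x = ω * y 0 * cos (ω * x) + deriv y 0 * sin (ω * x) := by
  have hy' : ∀ x ∈ s, HasDerivAt y (deriv y x) x := fun x hx =>
    ((hy.differentiableOn (by norm_num)).differentiableAt (hs.mem_nhds hx)).hasDerivAt
  have hy'' : ∀ x ∈ s, HasDerivAt (deriv y) (deriv (deriv y) x) x := fun x hx =>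
    (((hy.deriv_of_isOpen hs (m := 1) (by norm_num)).differentiableOn one_ne_zero).differentiableAt
      (hs.mem_nhds hx)).hasDerivAt
  have hcos (x : ℝ) : HasDerivAt (fun t => cos (ω * t)) (-sin (ω * x) * ω) x := by
    simpa using ((hasDerivAt_id x).const_mul ω).cos
  have hsin (x : ℝ) : HasDerivAt (fun t => sin (ω * t)) (cos (ω * x) * ω) x := by
    simpa using ((hasDerivAt_id x).const_mul ω).sin
  have hconst (F : ℝ → ℝ) (hF : ∀ x ∈ s, HasDerivAt F 0 x) : ∀ x ∈ s, F x = F 0 := fun x hx =>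
    hs.is_const_of_deriv_eq_zero hs' (fun z hz => (hF z hz).differentiableAt.differentiableWithinAt)
      (fun z hz => (hF z hz).deriv) hx h0
  have hA := hconst (fun x => ω * y x * cos (ω * x) - deriv y x * sin (ω * x)) fun x hx =>
    ((((hy' x hx).const_mul ω).mul (hcos x)).sub ((hy'' x hx).mul (hsin x))).congr_deriv
      (by linear_combination (-sin (ω * x)) * hode x hx)
  have hB := hconst (fun x => ω * y x * sin (ω * x) + deriv y x * cos (ω * x)) fun x hx =>
    ((((hy' x hx).const_mul ω).mul (hsin x)).add ((hy'' x hx).mul (hcos x))).congr_deriv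
      (by linear_combination cos (ω * x) * hode x hx)
  intro x hx
  have hAx := hA x hx
  have hBx := hB x hx
  simp only [mul_zero, cos_zero, sin_zero, mul_one, sub_zero, zero_add] at hAx hBx
  linear_combination cos (ω * x) * hAx + sin (ω * x) * hBx - ω * y x * sin_sq_add_cos_sq (ω * x)

theorem eq_mul_cos_sub_of_deriv_deriv_add_four_mul_eq_neg_one {s : Set ℝ} {h : ℝ → ℝ}
    (hs : IsOpen s) (hs' : IsPreconnected s) (h0 : (0 : ℝ) ∈ s) (hh : ContDiffOn ℝ 2 h s)
    (hode : ∀ x ∈ s, deriv (deriv h) x + 4 * h x = -1) (heven : ∀ x, h x = h (-x)) :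
    EqOn h (fun x => (h 0 + 1 / 4) * cos (2 * x) - 1 / 4) s := by
  intro x hx
  have hy := mul_eq_cos_add_sin_of_deriv_deriv_add_sq_mul_eq_zero (y := fun x => h x + 1 / 4) 2
    hs hs' h0 (hh.add contDiffOn_const) (fun x hx => by
      simp only [deriv_add_const']; linear_combination hode x hx) x hx
  simp only [deriv_add_const', deriv_eq_zero_of_even heven, zero_mul, add_zero] at hy
  linear_combination hy / 2

theorem not_forall_pos_of_deriv_deriv_add_four_mul_eq_neg_one {a : ℝ} {h : ℝ → ℝ}
    (ha : π / 4 ≤ a) (hh : ContDiffOn ℝ 2 h (Ioo (-a) a)) (hcont : ContinuousOn h (Icc (-a) a))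
    (hode : ∀ x ∈ Ioo (-a) a, deriv (deriv h) x + 4 * h x = -1) (heven : ∀ x, h x = h (-x)) :
    ¬ ∀ x ∈ Ioo (-a) a, 0 < h x := by
  intro hpos
  have ha₀ : 0 < a := lt_of_lt_of_le (by positivity) ha
  have hclosure : Icc (-a) a ⊆ closure (Ioo (-a) a) := (closure_Ioo (by linarith)).symm.subset
  have hmem : π / 4 ∈ Icc (-a) a := ⟨by linarith [pi_pos], ha⟩
  have hformula := (eq_mul_cos_sub_of_deriv_deriv_add_four_mul_eq_neg_one isOpen_Ioo
    isPreconnected_Ioo ⟨by linarith, ha₀⟩ hh hode heven).of_subset_closure hcont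
    (by fun_prop) Ioo_subset_Icc_self hclosure hmem
  have hnonneg : 0 ≤ h (π / 4) := continuousWithinAt_const.closure_le (hclosure hmem)
    ((hcont _ hmem).mono Ioo_subset_Icc_self) fun x hx => (hpos x hx).le
  have hcos : cos (2 * (π / 4)) = 0 := by rw [← cos_pi_div_two]; ring_nf
  simp only [hformula, hcos] at hnonneg
  linarith

/-- If α ≥ π/2, there is no positive symmetric solution of h'' + 4h = -1 on
(-α/2, α/2) vanishing at ±α/2; consequently the Saint-Venant problem on the sector
of angle α has no solution of the form r² h(θ). -/
theorem sector_no_solution_of_large_angle (α : ℝ) (hα : π / 2 ≤ α) :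
    (¬ ∃ h : ℝ → ℝ, ContDiffOn ℝ 2 h (Ioo (-(α / 2)) (α / 2)) ∧
      ContinuousOn h (Icc (-(α / 2)) (α / 2)) ∧
      (∀ θ ∈ Ioo (-(α / 2)) (α / 2), deriv (deriv h) θ + 4 * h θ = -1) ∧
      h (α / 2) = 0 ∧ h (-(α / 2)) = 0 ∧
      (∀ θ, h θ = h (-θ)) ∧
      (∀ θ ∈ Ioo (-(α / 2)) (α / 2), 0 < h θ)) ∧
    (¬ ∃ h : ℝ → ℝ, ContDiffOn ℝ 2 h (Ioo (-(α / 2)) (α / 2)) ∧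
      ContinuousOn h (Icc (-(α / 2)) (α / 2)) ∧
      (∀ r θ, 0 < r → θ ∈ Ioo (-(α / 2)) (α / 2) →
        deriv (deriv (fun r' : ℝ => r' ^ 2 * h θ)) r +
          (1 / r) * deriv (fun r' : ℝ => r' ^ 2 * h θ) r +
          (1 / r ^ 2) * deriv (deriv (fun θ' : ℝ => r ^ 2 * h θ')) θ = -1) ∧
      (∀ r : ℝ, 0 < r → r ^ 2 * h (α / 2) = 0 ∧ r ^ 2 * h (-(α / 2)) = 0) ∧
      (∀ θ, h θ = h (-θ)) ∧
      (∀ r θ, 0 < r → θ ∈ Ioo (-(α / 2)) (α / 2) → 0 < r ^ 2 * h θ)) := by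
  have ha : π / 4 ≤ α / 2 := by linarith
  refine ⟨?_, ?_⟩
  · rintro ⟨h, hh, hcont, hode, -, -, heven, hpos⟩
    exact not_forall_pos_of_deriv_deriv_add_four_mul_eq_neg_one ha hh hcont hode heven hpos
  · rintro ⟨h, hh, hcont, hpde, -, heven, hpos⟩
    refine not_forall_pos_of_deriv_deriv_add_four_mul_eq_neg_one ha hh hcont (fun θ hθ => ?_)
      heven fun θ hθ => by simpa using hpos 1 θ one_pos hθ
    have hunit : 2 * h θ + 2 * h θ + deriv (deriv h) θ = -1 := by
      simpa using hpde 1 θ one_pos hθ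
    linarith
end
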